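/- arXiv:1003.3379 — 4 statements merged into one kernel-verified Lean document; each statement's English description precedes it below -/
import Mathlib

section
/- Let A and B be Banach algebras, let T : A → B be a bounded linear bijective map, and define the bounded bilinear map m : A × B → B by m(a,b) = T(a)b (product taken in B). Then B is left strongly Arens irregular if and only if m is left strongly Arens irregular. -/
open Filter Topology ContinuousLinearMap NormedSpace

noncomputable section

/-- The topological dual of a seminormed space `E` (Mathlib's former `NormedSpace.Dual`, since
renamed `StrongDual`; restored here with its old definition). -/
abbrev NormedSpace.Dual (𝕜 : Type*) [NontriviallyNormedField 𝕜]
    (E : Type*) [SeminormedAddCommGroup E] [NormedSpace 𝕜 E] : Type _ := E →L[𝕜] 𝕜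

variable {X Y Z W E F : Type*}
  [NormedAddCommGroup X] [NormedSpace ℂ X]
  [NormedAddCommGroup Y] [NormedSpace ℂ Y]
  [NormedAddCommGroup Z] [NormedSpace ℂ Z]
  [NormedAddCommGroup E] [NormedSpace ℂ E]
  [NormedAddCommGroup F] [NormedSpace ℂ F]

/-- The (first) Arens adjoint `m* : Z* × X → Y*` of a bounded bilinear map
`m : X × Y → Z`, characterized by `⟨m*(z',x), y⟩ = ⟨z', m(x,y)⟩`. -/
noncomputable def arensAdj (m : X →L[ℂ] Y →L[ℂ] Z) :
    Dual ℂ Z →L[ℂ] X →L[ℂ] Dual ℂ Y :=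
  ((ContinuousLinearMap.compL ℂ Y Z ℂ).flip.comp m).flip

/-- The Arens triple adjoint `m*** : X** × Y** → Z**`. -/
noncomputable def arensExt (m : X →L[ℂ] Y →L[ℂ] Z) :
    Dual ℂ (Dual ℂ X) →L[ℂ] Dual ℂ (Dual ℂ Y) →L[ℂ] Dual ℂ (Dual ℂ Z) :=
  arensAdj (arensAdj (arensAdj m))

/-- A map between dual spaces is weak*-weak* continuous. -/
def IsWeakStarCont (f : Dual ℂ E → Dual ℂ F) : Prop :=
  Continuous fun x : WeakDual ℂ E =>
    StrongDual.toWeakDual (f (WeakDual.toStrongDual x))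

/-- First topological center of a bounded bilinear map. -/
def arensZ1 (m : X →L[ℂ] Y →L[ℂ] Z) : Set (Dual ℂ (Dual ℂ X)) :=
  {x'' | IsWeakStarCont fun y'' => arensExt m x'' y''}

/-- Second topological center of a bounded bilinear map. -/
def arensZ2 (m : X →L[ℂ] Y →L[ℂ] Z) : Set (Dual ℂ (Dual ℂ Y)) :=
  {y'' | IsWeakStarCont fun x'' => arensExt m.flip y'' x''}

/-- `m` is Arens regular when `m*** = m^{t***t}`. -/
def ArensRegular (m : X →L[ℂ] Y →L[ℂ] Z) : Prop :=
  arensExt m = (arensExt m.flip).flip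

/-- `m` is left strongly Arens irregular when `Z₁(m)` is the canonical image of `X`. -/
def LeftStronglyArensIrregular (m : X →L[ℂ] Y →L[ℂ] Z) : Prop :=
  arensZ1 m = Set.range (NormedSpace.inclusionInDoubleDual ℂ X)

/-- `m` is right strongly Arens irregular when `Z₂(m)` is the canonical image of `Y`. -/
def RightStronglyArensIrregular (m : X →L[ℂ] Y →L[ℂ] Z) : Prop :=
  arensZ2 m = Set.range (NormedSpace.inclusionInDoubleDual ℂ Y)

/-- The adjoint `T* : F* → E*` of a bounded linear map. -/
noncomputable def dualMap' (T : E →L[ℂ] F) : Dual ℂ F →L[ℂ] Dual ℂ E :=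
  (ContinuousLinearMap.compL ℂ E F ℂ).flip T

/-- The second adjoint `T** : E** → F**` of a bounded linear map. -/
noncomputable def bidualMap (T : E →L[ℂ] F) :
    Dual ℂ (Dual ℂ E) →L[ℂ] Dual ℂ (Dual ℂ F) :=
  dualMap' (dualMap' T)

/-- A net in `A`: a function from a nonempty directed preorder to `A`. -/
structure Net (A : Type*) where
  ι : Type
  [pre : Preorder ι]
  [dir : IsDirected ι (· ≤ ·)]
  [ne : Nonempty ι]
  e : ι → A

attribute [instance] Net.pre Net.dir Net.ne

/-- A bounded approximate identity for a (non-unital) Banach algebra. -/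
def IsBAI {A : Type*} [NonUnitalNormedRing A] (N : Net A) : Prop :=
  (∃ C : ℝ, ∀ i, ‖N.e i‖ ≤ C) ∧
  (∀ a : A, Tendsto (fun i => N.e i * a) atTop (𝓝 a)) ∧
  (∀ a : A, Tendsto (fun i => a * N.e i) atTop (𝓝 a))

end

/-! The Arens extension of `m ∘ T` is `(x'', y'') ↦ m***(T** x'', y'')`, so the first topological
center of `m ∘ T` is the preimage under `T**` of that of `m`. When `T` is an isomorphism, `T**` is
a bijection carrying the canonical image of `A` onto that of `B`, and the two centers coincide with
the canonical images simultaneously. -/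

section ArensComp

variable {X Y Z E F G : Type*}
  [NormedAddCommGroup X] [NormedSpace ℂ X]
  [NormedAddCommGroup Y] [NormedSpace ℂ Y]
  [NormedAddCommGroup Z] [NormedSpace ℂ Z]
  [NormedAddCommGroup E] [NormedSpace ℂ E]
  [NormedAddCommGroup F] [NormedSpace ℂ F]
  [NormedAddCommGroup G] [NormedSpace ℂ G]

theorem bidualMap_id : bidualMap (ContinuousLinearMap.id ℂ E) = ContinuousLinearMap.id ℂ _ :=
  rfl

theorem bidualMap_comp (S : F →L[ℂ] G) (T : E →L[ℂ] F) :
    bidualMap (S.comp T) = (bidualMap S).comp (bidualMap T) :=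
  rfl

theorem bidualMap_inclusionInDoubleDual (T : E →L[ℂ] F) (a : E) :
    bidualMap T (inclusionInDoubleDual ℂ E a) = inclusionInDoubleDual ℂ F (T a) :=
  rfl

theorem bidualMap_bijective (e : E ≃L[ℂ] F) : Function.Bijective (bidualMap (e : E →L[ℂ] F)) := by
  refine Function.bijective_iff_has_inverse.mpr ⟨bidualMap (e.symm : F →L[ℂ] E), ?_, ?_⟩
  · intro x''
    rw [← ContinuousLinearMap.comp_apply, ← bidualMap_comp, e.coe_symm_comp_coe, bidualMap_id]
    rfl
  · intro y''
    rw [← ContinuousLinearMap.comp_apply, ← bidualMap_comp, e.coe_comp_coe_symm, bidualMap_id]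
    rfl

theorem preimage_bidualMap_range_inclusionInDoubleDual (e : E ≃L[ℂ] F) :
    bidualMap (e : E →L[ℂ] F) ⁻¹' Set.range (inclusionInDoubleDual ℂ F) =
      Set.range (inclusionInDoubleDual ℂ E) := by
  ext x''
  constructor
  · rintro ⟨b, hb⟩
    refine ⟨e.symm b, (bidualMap_bijective e).injective ?_⟩
    rw [bidualMap_inclusionInDoubleDual, ← hb, ContinuousLinearEquiv.coe_coe,
      e.apply_symm_apply]
  · rintro ⟨a, rfl⟩
    exact ⟨e a, (bidualMap_inclusionInDoubleDual (e : E →L[ℂ] F) a).symm⟩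

theorem arensExt_comp (m : X →L[ℂ] Y →L[ℂ] Z) (T : E →L[ℂ] X) (x'' : Dual ℂ (Dual ℂ E)) :
    arensExt (m.comp T) x'' = arensExt m (bidualMap T x'') :=
  rfl

theorem arensZ1_comp (m : X →L[ℂ] Y →L[ℂ] Z) (T : E →L[ℂ] X) :
    arensZ1 (m.comp T) = bidualMap T ⁻¹' arensZ1 m := by
  ext x''
  simp only [arensZ1, Set.mem_ofPred_eq, Set.mem_preimage, arensExt_comp]

theorem leftStronglyArensIrregular_comp_iff (m : X →L[ℂ] Y →L[ℂ] Z) (e : E ≃L[ℂ] X) :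
    LeftStronglyArensIrregular (m.comp (e : E →L[ℂ] X)) ↔ LeftStronglyArensIrregular m := by
  rw [LeftStronglyArensIrregular, LeftStronglyArensIrregular, arensZ1_comp,
    ← preimage_bidualMap_range_inclusionInDoubleDual e,
    Set.preimage_eq_preimage (bidualMap_bijective e).surjective]

end ArensComp

theorem stmt_3_general {A B : Type*} [NonUnitalNormedRing A] [NormedSpace ℂ A] [CompleteSpace A] [NonUnitalNormedRing B] [NormedSpace ℂ B] [IsScalarTower ℂ B B] [SMulCommClass ℂ B B] [CompleteSpace B]
    (T : A →L[ℂ] B) (hT : Function.Bijective T) :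
    LeftStronglyArensIrregular (ContinuousLinearMap.mul ℂ B) ↔
      LeftStronglyArensIrregular ((ContinuousLinearMap.mul ℂ B).comp T) := by
  let e : A ≃L[ℂ] B := .ofBijective T (LinearMap.ker_eq_bot.mpr hT.injective)
    (LinearMap.range_eq_top.mpr hT.surjective)
  have he : (e : A →L[ℂ] B) = T := ContinuousLinearEquiv.coe_ofBijective _ _ _
  rw [← he, leftStronglyArensIrregular_comp_iff]

/-- For bijective `T`, `B` is left strongly Arens irregular iff
`m(a,b) = T(a)b` is. -/
theorem stmt_3 {A B : Type*} [NonUnitalNormedRing A] [NormedSpace ℂ A] [IsScalarTower ℂ A A] [SMulCommClass ℂ A A] [CompleteSpace A] [NonUnitalNormedRing B] [NormedSpace ℂ B] [IsScalarTower ℂ B B] [SMulCommClass ℂ B B] [CompleteSpace B]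
    (T : A →L[ℂ] B) (hT : Function.Bijective T) :
    LeftStronglyArensIrregular (ContinuousLinearMap.mul ℂ B) ↔
      LeftStronglyArensIrregular ((ContinuousLinearMap.mul ℂ B).comp T) :=
  stmt_3_general T hT
end

section
/- Let A be a Banach algebra and B a right Banach A-module with action π_r : B × A → B. Let T : A → B be a bounded linear map which is an extended left multiplier, i.e. T(a₁a₂) = π_r(T(a₁), a₂) for all a₁, a₂ ∈ A. Then the second adjoint T** : A** → B** satisfies T**(a₁''a₂'') = π_r***(T**(a₁''), a₂'') for all a₁'', a₂'' ∈ A**, where a₁''a₂'' denotes the first Arens product on A**. -/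
open Filter Topology ContinuousLinearMap NormedSpace

/-!
The second adjoint intertwines Arens extensions: if `S (m x y) = n (T x) y`, then
`S** (m*** x'' y'') = n*** (T** x'') y''`. This is checked one adjoint at a time, pairing with
`v' ∈ V*`: `m*(S* v', x) = n*(v', T x)`, hence `m**(y'', S* v') = T* (n**(y'', v'))`, and pairing
with `x''` gives the claim. The theorem is the case `m = π`, `n = π_r`, `S = T`.
-/

section ArensNaturality

variable {X Y Z U V : Type*}
  [NormedAddCommGroup X] [NormedSpace ℂ X]
  [NormedAddCommGroup Y] [NormedSpace ℂ Y]
  [NormedAddCommGroup Z] [NormedSpace ℂ Z]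
  [NormedAddCommGroup U] [NormedSpace ℂ U]
  [NormedAddCommGroup V] [NormedSpace ℂ V]
  {m : X →L[ℂ] Y →L[ℂ] Z} {n : U →L[ℂ] Y →L[ℂ] V} {T : X →L[ℂ] U} {S : Z →L[ℂ] V}

@[simp]
theorem arensAdj_apply_apply (z' : Dual ℂ Z) (x : X) (y : Y) :
    arensAdj m z' x y = z' (m x y) :=
  rfl

@[simp]
theorem dualMap'_apply (f : Dual ℂ U) (x : X) : dualMap' T f x = f (T x) :=
  rfl

theorem arensAdj_dualMap' (h : ∀ x y, S (m x y) = n (T x) y) (v' : Dual ℂ V) :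
    arensAdj m (dualMap' S v') = (arensAdj n v').comp T := by
  ext x y
  simp [h]

theorem arensAdj_arensAdj_dualMap' (h : ∀ x y, S (m x y) = n (T x) y)
    (y'' : Dual ℂ (Dual ℂ Y)) (v' : Dual ℂ V) :
    arensAdj (arensAdj m) y'' (dualMap' S v') = dualMap' T (arensAdj (arensAdj n) y'' v') := by
  ext x
  simp [arensAdj_dualMap' h]

theorem bidualMap_arensExt (h : ∀ x y, S (m x y) = n (T x) y)
    (x'' : Dual ℂ (Dual ℂ X)) (y'' : Dual ℂ (Dual ℂ Y)) :
    bidualMap S (arensExt m x'' y'') = arensExt n (bidualMap T x'') y'' := by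
  ext v'
  simp [bidualMap, arensExt, arensAdj_arensAdj_dualMap' h]

end ArensNaturality

theorem stmt_7_general {A B : Type*} [NonUnitalNormedRing A] [NormedSpace ℂ A] [IsScalarTower ℂ A A] [SMulCommClass ℂ A A] [NormedAddCommGroup B] [NormedSpace ℂ B]
    (πr : B →L[ℂ] A →L[ℂ] B)
    (T : A →L[ℂ] B)
    (hT : ∀ a₁ a₂ : A, T (a₁ * a₂) = πr (T a₁) a₂) :
    ∀ a₁'' a₂'' : Dual ℂ (Dual ℂ A),
      bidualMap T (arensExt (ContinuousLinearMap.mul ℂ A) a₁'' a₂'') =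
        arensExt πr (bidualMap T a₁'') a₂'' :=
  bidualMap_arensExt hT

/-- If `T(a₁a₂) = π_r(T(a₁),a₂)` then
`T**(a₁''a₂'') = π_r***(T**(a₁''),a₂'')` for all `a₁'', a₂'' ∈ A**`. -/
theorem stmt_7 {A B : Type*} [NonUnitalNormedRing A] [NormedSpace ℂ A] [IsScalarTower ℂ A A] [SMulCommClass ℂ A A] [CompleteSpace A] [NormedAddCommGroup B] [NormedSpace ℂ B] [CompleteSpace B]
    (πr : B →L[ℂ] A →L[ℂ] B)
    (hmod : ∀ (b : B) (a₁ a₂ : A), πr (πr b a₁) a₂ = πr b (a₁ * a₂))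
    (T : A →L[ℂ] B)
    (hT : ∀ a₁ a₂ : A, T (a₁ * a₂) = πr (T a₁) a₂) :
    ∀ a₁'' a₂'' : Dual ℂ (Dual ℂ A),
      bidualMap T (arensExt (ContinuousLinearMap.mul ℂ A) a₁'' a₂'') =
        arensExt πr (bidualMap T a₁'') a₂'' :=
  stmt_7_general πr T hT
end

section
/- Let A be a Banach algebra whose bidual A** has a mixed unit e'' which is the weak* limit of a bounded approximate identity (e_α) of A, and let B be a left Banach A-module with action π_ℓ : A × B → B. Then B* factors on the left with respect to A, i.e. B*A = B*, if and only if e'' is a left unit A**-module for B**, i.e. π_ℓ***(e'', b'') = b'' for every b'' ∈ B**. -/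
open Filter Topology ContinuousLinearMap NormedSpace

/-!
Write `b'·a` for the right action of `A` on `B*`. Since
`⟨π_ℓ***(e'', b''), b'⟩ = lim_α ⟨b'', b'·e_α⟩`, `e''` is a left unit for `B**` exactly when
`b'·e_α → b'` weakly for every `b'`. The `b'` with
`b'·e_α → b'` in norm form a closed subspace (the approximate identity is bounded) that contains
every `b'·e_α`, so it contains all weak limits of such nets. Hence `e''` is a left unit iff this
essential part is all of `B*`, and the Cohen–Hewitt factorization theorem identifies the essential
part with `B*A`.

To factor an essential `x`, let the `ℓ¹`-unitization `A₁` of `A` act on the right. Perturbing `1`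
step by step gives units `w_{n+1} = w_n + t(1-t)ⁿ(e_{α_n} - 1)` with scalar part `(1-t)ⁿ`.
Choosing each `α_n` far enough out makes both `w_n → a ∈ A` and `x·w_n⁻¹ → y` converge
geometrically, and then `x = y·a`.
-/

theorem Submodule.mem_of_forall_tendsto_dual {𝕜 E ι : Type*} [RCLike 𝕜] [NormedAddCommGroup E]
    [NormedSpace 𝕜 E] {S : Submodule 𝕜 E} (hS : IsClosed (S : Set E)) {l : Filter ι} [l.NeBot]
    {u : ι → E} {x : E} (hu : ∀ i, u i ∈ S)
    (hx : ∀ f : StrongDual 𝕜 E, Tendsto (fun i => f (u i)) l (𝓝 (f x))) : x ∈ S := by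
  have : IsClosed (S : Set E) := hS
  rw [← Submodule.Quotient.mk_eq_zero]
  refine SeparatingDual.eq_zero_of_forall_dual_eq_zero (R := 𝕜) fun g => ?_
  have hu0 (i : ι) : S.mkQ (u i) = 0 := (Submodule.Quotient.mk_eq_zero S).mpr (hu i)
  have hg := hx (g.comp S.mkQL)
  simp only [ContinuousLinearMap.comp_apply, Submodule.mkQL_apply, hu0, map_zero] at hg
  exact tendsto_nhds_unique hg tendsto_const_nhds

lemma Units.exists_val_eq_add_of_norm_inv_mul_le_half {R : Type*} [NormedRing R] [NormOneClass R]
    [CompleteSpace R] (w : Rˣ) (h : R) (hh : ‖(↑w⁻¹ : R) * h‖ ≤ 1 / 2) :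
    ∃ w' : Rˣ, (w' : R) = w + h ∧ ‖(↑w'⁻¹ : R)‖ ≤ 2 * ‖(↑w⁻¹ : R)‖ := by
  have hlt : ‖-((↑w⁻¹ : R) * h)‖ < 1 := by rw [norm_neg]; linarith
  set v := Units.oneSub _ hlt
  refine ⟨w * v, by simp [v, mul_add], ?_⟩
  have hv : ‖(↑v⁻¹ : R)‖ ≤ 2 := by
    have hgeom := tsum_geometric_le_of_norm_lt_one _ hlt
    rw [norm_one, norm_neg, sub_self, zero_add] at hgeom
    exact hgeom.trans (inv_le_of_inv_le₀ (by norm_num) (by linarith))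
  calc ‖(↑(w * v)⁻¹ : R)‖ = ‖(↑v⁻¹ : R) * ↑w⁻¹‖ := by rw [mul_inv_rev, Units.val_mul]
    _ ≤ ‖(↑v⁻¹ : R)‖ * ‖(↑w⁻¹ : R)‖ := norm_mul_le _ _
    _ ≤ 2 * ‖(↑w⁻¹ : R)‖ := by gcongr

lemma Units.val_inv_sub_val_inv {R : Type*} [Ring R] (w w' : Rˣ) :
    (↑w'⁻¹ : R) - ↑w⁻¹ = -(↑w⁻¹ * (↑w' - ↑w) * ↑w'⁻¹) := by
  simp [mul_sub, sub_mul, mul_assoc]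

section Essential

variable {A X ι : Type*} [NonUnitalNormedRing A] [NormedSpace ℂ A]
  [NormedAddCommGroup X] [NormedSpace ℂ X] (ρ : X →L[ℂ] A →L[ℂ] X) (l : Filter ι) (e : ι → A)

def essentialSubmodule : Submodule ℂ X where
  carrier := {x | Tendsto (fun i => ρ x (e i)) l (𝓝 x)}
  add_mem' hx hy := by simpa using hx.add hy
  zero_mem' := by simpa using tendsto_const_nhds
  smul_mem' c x hx := by simpa using hx.const_smul c

variable {ρ l e}

lemma mem_essentialSubmodule {x : X} :
    x ∈ essentialSubmodule ρ l e ↔ Tendsto (fun i => ρ x (e i)) l (𝓝 x) := Iff.rfl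

lemma isClosed_essentialSubmodule (he : ∃ C, ∀ i, ‖e i‖ ≤ C) :
    IsClosed (essentialSubmodule ρ l e : Set X) := by
  obtain ⟨C, hC⟩ := he
  have hbdd : ∃ C, ∀ i, ‖ρ.flip (e i)‖ ≤ C :=
    ⟨‖ρ.flip‖ * C, fun i => (ρ.flip.le_opNorm _).trans (by gcongr; exact hC i)⟩
  have hequi := ((NormedSpace.equicontinuous_TFAE fun i => ρ.flip (e i)).out 5 1).mp hbdd
  exact hequi.isClosed_setOfPred_tendsto continuous_id

lemma apply_mem_essentialSubmodule (hρ : ∀ (x : X) (a b : A), ρ (ρ x a) b = ρ x (a * b))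
    (he : ∀ a, Tendsto (fun i => a * e i) l (𝓝 a)) (x : X) (a : A) :
    ρ x a ∈ essentialSubmodule ρ l e := by
  simp only [mem_essentialSubmodule, hρ]
  exact ((ρ x).continuous.tendsto a).comp (he a)

end Essential

namespace WithLp

variable {A : Type*} [NonUnitalNormedRing A] [NormedSpace ℂ A] [IsScalarTower ℂ A A]
  [SMulCommClass ℂ A A]

local notation "𝔄" => WithLp 1 (Unitization ℂ A)

lemma unitization_ofLp_one : ofLp (1 : 𝔄) = 1 := rfl

instance instUnitizationNormOneClass : NormOneClass 𝔄 :=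
  ⟨by simp [unitization_norm_def, unitization_ofLp_one]⟩

lemma unitization_norm_fst_le (u : 𝔄) : ‖(ofLp u).fst‖ ≤ ‖u‖ := by
  rw [unitization_norm_def]; exact le_add_of_nonneg_right (norm_nonneg _)

lemma unitization_norm_snd_le (u : 𝔄) : ‖(ofLp u).snd‖ ≤ ‖u‖ := by
  rw [unitization_norm_def]; exact le_add_of_nonneg_left (norm_nonneg _)

noncomputable def unitizationFst : 𝔄 →ₐ[ℂ] ℂ :=
  (Unitization.fstHom ℂ A).comp (unitizationAlgEquiv ℂ).toAlgHom

@[simp] lemma unitizationFst_apply (u : 𝔄) : unitizationFst u = (ofLp u).fst := rfl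

lemma continuous_unitizationFst : Continuous (unitizationFst : 𝔄 → ℂ) :=
  AddMonoidHomClass.continuous_of_bound _ 1 fun u => by simpa using unitization_norm_fst_le u

lemma unitization_norm_fst_inv (w : 𝔄ˣ) : ‖(ofLp (↑w⁻¹ : 𝔄)).fst‖ = ‖(ofLp (w : 𝔄)).fst‖⁻¹ := by
  rw [← norm_inv, ← unitizationFst_apply, ← unitizationFst_apply, map_units_inv]

lemma unitization_norm_inr_sub_one_le (a : A) : ‖toLp 1 (a : Unitization ℂ A) - 1‖ ≤ ‖a‖ + 1 :=
  (norm_sub_le _ _).trans (by rw [unitization_norm_inr, norm_one])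

lemma unitization_mul_inr_sub_one (u : 𝔄) (a : A) :
    u * (toLp 1 (a : Unitization ℂ A) - 1) = (ofLp u).fst • (toLp 1 (a : Unitization ℂ A) - 1) +
      toLp 1 (((ofLp u).snd * a - (ofLp u).snd : A) : Unitization ℂ A) := by
  apply ofLp_injective 1
  ext
  · show (ofLp u * ((a : Unitization ℂ A) - 1)).fst = _
    simp [unitization_ofLp_one, sub_eq_add_neg]
  · show (ofLp u * ((a : Unitization ℂ A) - 1)).snd = _
    simp [unitization_ofLp_one, sub_eq_add_neg, add_comm, add_left_comm]

lemma unitization_norm_mul_inr_sub_one_le (u : 𝔄) (a : A) :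
    ‖u * (toLp 1 (a : Unitization ℂ A) - 1)‖ ≤
      ‖(ofLp u).fst‖ * (‖a‖ + 1) + ‖(ofLp u).snd * a - (ofLp u).snd‖ := by
  rw [unitization_mul_inr_sub_one]
  refine (norm_add_le _ _).trans (add_le_add ?_ (unitization_norm_inr _).le)
  rw [norm_smul]
  exact mul_le_mul_of_nonneg_left (unitization_norm_inr_sub_one_le a) (norm_nonneg _)

lemma unitization_norm_inv_mul_smul_inr_sub_one_le (w : 𝔄ˣ) {a : A} {C s : ℝ} (ha : ‖a‖ ≤ C)
    (hs0 : 0 ≤ s) (hsC : s * (C + 1) ≤ ‖(ofLp (w : 𝔄)).fst‖ / 4) (hs : s ≤ 1 / 4)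
    (hc : ‖(ofLp (↑w⁻¹ : 𝔄)).snd * a - (ofLp (↑w⁻¹ : 𝔄)).snd‖ ≤ 1) :
    ‖(↑w⁻¹ : 𝔄) * ((s : ℂ) • (toLp 1 (a : Unitization ℂ A) - 1))‖ ≤ 1 / 2 := by
  have hfst : 0 < ‖(ofLp (w : 𝔄)).fst‖ := norm_pos_iff.mpr (w.isUnit.map unitizationFst).ne_zero
  rw [mul_smul_comm, norm_smul, Complex.norm_real, Real.norm_of_nonneg hs0]
  calc s * ‖(↑w⁻¹ : 𝔄) * (toLp 1 (a : Unitization ℂ A) - 1)‖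
      ≤ s * (‖(ofLp (w : 𝔄)).fst‖⁻¹ * (C + 1) + 1) := by
        gcongr
        refine (unitization_norm_mul_inr_sub_one_le _ _).trans ?_
        rw [unitization_norm_fst_inv]
        gcongr
    _ = s * (C + 1) / ‖(ofLp (w : 𝔄)).fst‖ + s := by field_simp
    _ ≤ 1 / 4 + 1 / 4 := add_le_add (by rw [div_le_iff₀ hfst]; linarith) hs
    _ = 1 / 2 := by norm_num

end WithLp

section Cohen

open WithLp

variable {A X ι : Type*} [NonUnitalNormedRing A] [NormedSpace ℂ A] [IsScalarTower ℂ A A]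
  [SMulCommClass ℂ A A] [NormedAddCommGroup X] [NormedSpace ℂ X]
  {l : Filter ι} {e : ι → A}

local notation "𝔄" => WithLp 1 (Unitization ℂ A)

lemma norm_fst_smul_add_apply_snd_le (ρ : X →L[ℂ] A →L[ℂ] X) (x : X) (u : 𝔄) :
    ‖(ofLp u).fst • x + ρ x (ofLp u).snd‖ ≤ (1 + ‖ρ‖) * ‖x‖ * ‖u‖ :=
  calc ‖(ofLp u).fst • x + ρ x (ofLp u).snd‖
      ≤ ‖(ofLp u).fst‖ * ‖x‖ + ‖ρ‖ * ‖x‖ * ‖(ofLp u).snd‖ :=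
        (norm_add_le _ _).trans (add_le_add (norm_smul _ _).le (ρ.le_opNorm₂ _ _))
    _ ≤ ‖u‖ * ‖x‖ + ‖ρ‖ * ‖x‖ * ‖u‖ := by
        gcongr
        exacts [unitization_norm_fst_le u, unitization_norm_snd_le u]
    _ = (1 + ‖ρ‖) * ‖x‖ * ‖u‖ := by ring

noncomputable def unitizationAct (ρ : X →L[ℂ] A →L[ℂ] X) : X →L[ℂ] 𝔄 →L[ℂ] X :=
  LinearMap.mkContinuous₂
    (LinearMap.mk₂ ℂ (fun x u => (ofLp u).fst • x + ρ x (ofLp u).snd)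
      (fun x y u => by simp only [smul_add, map_add, add_apply]; abel)
      (fun c x u => by simp only [smul_comm c, smul_add, map_smul, smul_apply])
      (fun x u v => by
        simp only [ofLp_add, Unitization.fst_add, Unitization.snd_add, add_smul, map_add]; abel)
      (fun c x u => by
        simp only [ofLp_smul, Unitization.fst_smul, Unitization.snd_smul, smul_eq_mul, mul_smul,
          map_smul, smul_add]))
    (1 + ‖ρ‖) (norm_fst_smul_add_apply_snd_le ρ)

variable {ρ : X →L[ℂ] A →L[ℂ] X}

@[simp] lemma unitizationAct_apply (x : X) (u : 𝔄) :
    unitizationAct ρ x u = (ofLp u).fst • x + ρ x (ofLp u).snd := rfl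

lemma norm_unitizationAct_le (x : X) (u : 𝔄) :
    ‖unitizationAct ρ x u‖ ≤ (1 + ‖ρ‖) * ‖x‖ * ‖u‖ :=
  norm_fst_smul_add_apply_snd_le ρ x u

lemma unitizationAct_one (x : X) : unitizationAct ρ x 1 = x := by
  simp [unitization_ofLp_one]

lemma unitizationAct_inr (x : X) (a : A) :
    unitizationAct ρ x (toLp 1 (a : Unitization ℂ A)) = ρ x a := by
  simp

lemma unitizationAct_mul (hρ : ∀ (x : X) (a b : A), ρ (ρ x a) b = ρ x (a * b)) (x : X)
    (u v : 𝔄) : unitizationAct ρ x (u * v) = unitizationAct ρ (unitizationAct ρ x u) v := by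
  simp only [unitizationAct_apply, unitization_mul, Unitization.fst_mul, Unitization.snd_mul,
    map_add, map_smul, smul_add, add_apply, smul_apply, hρ, mul_smul]
  abel

lemma unitizationAct_mem_essentialSubmodule
    (hρ : ∀ (x : X) (a b : A), ρ (ρ x a) b = ρ x (a * b))
    (he : ∀ a, Tendsto (fun i => a * e i) l (𝓝 a)) {x : X} (hx : x ∈ essentialSubmodule ρ l e)
    (u : 𝔄) : unitizationAct ρ x u ∈ essentialSubmodule ρ l e :=
  add_mem (Submodule.smul_mem _ _ hx) (apply_mem_essentialSubmodule hρ he x _)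

lemma exists_units_eq_add_smul_inr_sub_one (hρ : ∀ (x : X) (a b : A), ρ (ρ x a) b = ρ x (a * b))
    [CompleteSpace A] {C : ℝ} (hC : ∀ i, ‖e i‖ ≤ C) (he : ∀ a, Tendsto (fun i => a * e i) l (𝓝 a))
    [l.NeBot] {x : X} (hx : x ∈ essentialSubmodule ρ l e) (w : 𝔄ˣ) {s : ℝ} (hs0 : 0 ≤ s)
    (hsC : s * (C + 1) ≤ ‖(ofLp (w : 𝔄)).fst‖ / 4) (hs : s ≤ 1 / 4) {δ : ℝ} (hδ : 0 < δ) :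
    ∃ i, ∃ w' : 𝔄ˣ, (w' : 𝔄) = w + (s : ℂ) • (toLp 1 (e i : Unitization ℂ A) - 1) ∧
      ‖unitizationAct ρ x ↑w'⁻¹ - unitizationAct ρ x ↑w⁻¹‖ ≤ δ := by
  set c := (ofLp (↑w⁻¹ : 𝔄)).snd
  set y := unitizationAct ρ x ↑w⁻¹
  set K := 1 + ‖ρ‖
  set M := ‖(↑w⁻¹ : 𝔄)‖
  set ε := δ / ((K + 1) * (2 * M + 1))
  have hε : 0 < ε := by positivity
  have hy : y ∈ essentialSubmodule ρ l e := unitizationAct_mem_essentialSubmodule hρ he hx _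
  obtain ⟨i, hci, hyi⟩ : ∃ i, ‖c * e i - c‖ ≤ 1 ∧ ‖ρ y (e i) - y‖ ≤ ε := by
    have h1 := (he c).eventually (Metric.closedBall_mem_nhds c one_pos)
    have h2 := (mem_essentialSubmodule.mp hy).eventually (Metric.closedBall_mem_nhds y hε)
    simpa [dist_eq_norm] using (h1.and h2).exists
  obtain ⟨w', hw', hinv'⟩ := Units.exists_val_eq_add_of_norm_inv_mul_le_half w _
    (unitization_norm_inv_mul_smul_inr_sub_one_le w (hC i) hs0 hsC hs hci)
  refine ⟨i, w', hw', ?_⟩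
  have hdiff : unitizationAct ρ x ↑w'⁻¹ - unitizationAct ρ x ↑w⁻¹ =
      -((s : ℂ) • unitizationAct ρ (ρ y (e i) - y) ↑w'⁻¹) := by
    rw [← map_sub, Units.val_inv_sub_val_inv, hw', add_sub_cancel_left, mul_smul_comm,
      smul_mul_assoc, map_neg, map_smul, unitizationAct_mul hρ, unitizationAct_mul hρ, map_sub,
      unitizationAct_inr, unitizationAct_one]
  have hKM : 0 < (K + 1) * (2 * M + 1) := by positivity
  have hKε : K * ε * (2 * M) ≤ δ :=
    calc K * ε * (2 * M) ≤ (K + 1) * ε * (2 * M + 1) := by gcongr <;> linarith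
      _ = δ := by rw [mul_right_comm, mul_div_cancel₀ _ hKM.ne']
  calc _ = s * ‖unitizationAct ρ (ρ y (e i) - y) ↑w'⁻¹‖ := by
        rw [hdiff, norm_neg, norm_smul, Complex.norm_real, Real.norm_of_nonneg hs0]
    _ ≤ s * (K * ε * (2 * M)) := by
        gcongr
        exact (norm_unitizationAct_le _ _).trans (by gcongr)
    _ ≤ 1 * δ := by gcongr; linarith
    _ = δ := one_mul δ

lemma exists_units_fst_eq_pow_succ (hρ : ∀ (x : X) (a b : A), ρ (ρ x a) b = ρ x (a * b))
    [CompleteSpace A] {C : ℝ} (hC0 : 0 ≤ C) (hC : ∀ i, ‖e i‖ ≤ C)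
    (he : ∀ a, Tendsto (fun i => a * e i) l (𝓝 a)) [l.NeBot] {x : X}
    (hx : x ∈ essentialSubmodule ρ l e) {t : ℝ} (ht0 : 0 < t) (htC : t * (C + 1) = 1 / 4)
    (n : ℕ) (w : 𝔄ˣ) (hw : (ofLp (w : 𝔄)).fst = ((1 - t : ℝ) : ℂ) ^ n) :
    ∃ w' : 𝔄ˣ, (ofLp (w' : 𝔄)).fst = ((1 - t : ℝ) : ℂ) ^ (n + 1) ∧
      ‖(w' : 𝔄) - w‖ ≤ (1 - t) ^ n ∧
      ‖unitizationAct ρ x ↑w'⁻¹ - unitizationAct ρ x ↑w⁻¹‖ ≤ (1 / 2) ^ n := by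
  have ht : t ≤ 1 / 4 := by nlinarith
  have hpow : 0 < (1 - t) ^ n := pow_pos (by linarith) n
  have hpow1 : (1 - t) ^ n ≤ 1 := pow_le_one₀ (by linarith) (by linarith)
  have hs : t * (1 - t) ^ n * (C + 1) = (1 - t) ^ n / 4 := by
    linear_combination (1 - t) ^ n * htC
  obtain ⟨i, w', hw', hδ⟩ := exists_units_eq_add_smul_inr_sub_one hρ hC he hx w
    (s := t * (1 - t) ^ n) (by positivity)
    (by rw [hw, hs, norm_pow, Complex.norm_real, Real.norm_of_nonneg (by linarith)])
    (by nlinarith) (δ := (1 / 2) ^ n) (by positivity)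
  refine ⟨w', ?_, ?_, hδ⟩
  · rw [← unitizationFst_apply, hw', map_add, map_smul, map_sub, map_one, unitizationFst_apply,
      unitizationFst_apply, hw, ofLp_toLp, Unitization.fst_inr, smul_eq_mul]
    push_cast
    ring
  · rw [hw', add_sub_cancel_left, norm_smul, Complex.norm_real,
      Real.norm_of_nonneg (by positivity)]
    calc t * (1 - t) ^ n * ‖toLp 1 (e i : Unitization ℂ A) - 1‖
        ≤ t * (1 - t) ^ n * (C + 1) := by
          gcongr
          exact (unitization_norm_inr_sub_one_le _).trans (by gcongr; exact hC i)
      _ ≤ (1 - t) ^ n := by linarith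

lemma exists_seq_units_geometric (hρ : ∀ (x : X) (a b : A), ρ (ρ x a) b = ρ x (a * b))
    [CompleteSpace A] (hbdd : ∃ C, ∀ i, ‖e i‖ ≤ C) (he : ∀ a, Tendsto (fun i => a * e i) l (𝓝 a))
    [l.NeBot] {x : X} (hx : x ∈ essentialSubmodule ρ l e) :
    ∃ r : ℝ, 0 ≤ r ∧ r < 1 ∧ ∃ w : ℕ → 𝔄ˣ, (∀ n, (ofLp (w n : 𝔄)).fst = (r : ℂ) ^ n) ∧
      (∀ n, ‖(w (n + 1) : 𝔄) - w n‖ ≤ r ^ n) ∧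
      ∀ n, ‖unitizationAct ρ x ↑(w (n + 1))⁻¹ - unitizationAct ρ x ↑(w n)⁻¹‖ ≤ (1 / 2) ^ n := by
  obtain ⟨C, hC⟩ := hbdd
  set t := 1 / (4 * (max C 0 + 1))
  have ht0 : 0 < t := by positivity
  have htC : t * (max C 0 + 1) = 1 / 4 := by simp only [t]; field_simp
  have ht : t ≤ 1 / 4 := by nlinarith [le_max_right C 0]
  choose! next hnext using exists_units_fst_eq_pow_succ hρ (le_max_right C 0)
    (fun i => (hC i).trans (le_max_left C 0)) he hx ht0 htC
  obtain ⟨w, hw0, hwsucc⟩ : ∃ w : ℕ → 𝔄ˣ, w 0 = 1 ∧ ∀ n, w (n + 1) = next n (w n) :=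
    ⟨fun n => Nat.rec 1 next n, rfl, fun n => rfl⟩
  have hw (n : ℕ) : (ofLp (w n : 𝔄)).fst = ((1 - t : ℝ) : ℂ) ^ n := by
    induction n with
    | zero => simp [hw0, unitization_ofLp_one]
    | succ n ih => rw [hwsucc]; exact (hnext n _ ih).1
  refine ⟨1 - t, by linarith, by linarith, w, hw, fun n => ?_, fun n => ?_⟩
  · rw [hwsucc]; exact (hnext n _ (hw n)).2.1
  · rw [hwsucc]; exact (hnext n _ (hw n)).2.2

theorem exists_eq_apply_of_mem_essentialSubmodule [CompleteSpace A] [CompleteSpace X] [l.NeBot]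
    (hρ : ∀ (x : X) (a b : A), ρ (ρ x a) b = ρ x (a * b)) (hbdd : ∃ C, ∀ i, ‖e i‖ ≤ C)
    (he : ∀ a, Tendsto (fun i => a * e i) l (𝓝 a)) {x : X}
    (hx : x ∈ essentialSubmodule ρ l e) : ∃ y a, x = ρ y a := by
  obtain ⟨r, hr0, hr1, w, hfst, hw, hwx⟩ := exists_seq_units_geometric hρ hbdd he hx
  have hcw : CauchySeq fun n => (w n : 𝔄) := cauchySeq_of_le_geometric r 1 hr1 fun n => by
    rw [dist_comm, dist_eq_norm, one_mul]; exact hw n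
  have hcy : CauchySeq fun n => unitizationAct ρ x ↑(w n)⁻¹ :=
    cauchySeq_of_le_geometric (1 / 2) 1 (by norm_num) fun n => by
      rw [dist_comm, dist_eq_norm, one_mul]; exact hwx n
  obtain ⟨u, hu⟩ := cauchySeq_tendsto_of_complete hcw
  obtain ⟨y, hy⟩ := cauchySeq_tendsto_of_complete hcy
  have hu0 : (ofLp u).fst = 0 := by
    have h := (continuous_unitizationFst.tendsto u).comp hu
    simp only [Function.comp_def, unitizationFst_apply, hfst] at h
    refine tendsto_nhds_unique h (tendsto_pow_atTop_nhds_zero_of_norm_lt_one ?_)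
    rwa [Complex.norm_real, Real.norm_of_nonneg hr0]
  have hxw (n : ℕ) : unitizationAct ρ (unitizationAct ρ x ↑(w n)⁻¹) (w n) = x := by
    rw [← unitizationAct_mul hρ, Units.inv_mul, unitizationAct_one]
  have hc : Continuous fun p : X × 𝔄 => unitizationAct ρ p.1 p.2 := (unitizationAct ρ).continuous₂
  have hlim := (hc.tendsto (y, u)).comp (hy.prodMk_nhds hu)
  simp only [Function.comp_def, hxw] at hlim
  refine ⟨y, (ofLp u).snd, ?_⟩
  rw [tendsto_nhds_unique tendsto_const_nhds hlim, unitizationAct_apply, hu0, zero_smul, zero_add]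

theorem mem_essentialSubmodule_iff_exists_eq_apply [CompleteSpace A] [CompleteSpace X] [l.NeBot]
    (hρ : ∀ (x : X) (a b : A), ρ (ρ x a) b = ρ x (a * b)) (hbdd : ∃ C, ∀ i, ‖e i‖ ≤ C)
    (he : ∀ a, Tendsto (fun i => a * e i) l (𝓝 a)) {x : X} :
    x ∈ essentialSubmodule ρ l e ↔ ∃ y a, x = ρ y a :=
  ⟨exists_eq_apply_of_mem_essentialSubmodule hρ hbdd he,
    fun ⟨y, a, hya⟩ => hya ▸ apply_mem_essentialSubmodule hρ he y a⟩

end Cohen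

section Arens

variable {X Y : Type*} [NormedAddCommGroup X] [NormedSpace ℂ X] [NormedAddCommGroup Y]
  [NormedSpace ℂ Y]

lemma arensAdj_arensAdj_of_map_mul {A : Type*} [NonUnitalNormedRing A] [NormedSpace ℂ A]
    {m : A →L[ℂ] Y →L[ℂ] Y} (hm : ∀ (a₁ a₂ : A) (y : Y), m (a₁ * a₂) y = m a₁ (m a₂ y))
    (y' : Dual ℂ Y) (a₁ a₂ : A) :
    arensAdj m (arensAdj m y' a₁) a₂ = arensAdj m y' (a₁ * a₂) := by
  ext y
  exact congrArg y' (hm a₁ a₂ y).symm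

lemma tendsto_arensExt_apply_apply {ι Z : Type*} [NormedAddCommGroup Z] [NormedSpace ℂ Z]
    {l : Filter ι} (m : X →L[ℂ] Y →L[ℂ] Z) {x'' : Dual ℂ (Dual ℂ X)} {u : ι → X}
    (hu : ∀ x' : Dual ℂ X, Tendsto (fun i => x' (u i)) l (𝓝 (x'' x')))
    (y'' : Dual ℂ (Dual ℂ Y)) (z' : Dual ℂ Z) :
    Tendsto (fun i => y'' (arensAdj m z' (u i))) l (𝓝 (arensExt m x'' y'' z')) :=
  hu _

end Arens

theorem stmt_14_general {A B : Type*} [NonUnitalNormedRing A] [NormedSpace ℂ A] [IsScalarTower ℂ A A] [SMulCommClass ℂ A A] [CompleteSpace A] [NormedAddCommGroup B] [NormedSpace ℂ B]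
    (πl : A →L[ℂ] B →L[ℂ] B)
    (hmod : ∀ (a₁ a₂ : A) (b : B), πl (a₁ * a₂) b = πl a₁ (πl a₂ b))
    (e'' : Dual ℂ (Dual ℂ A))
    (N : Net A) (hN : IsBAI N)
    (hlim : ∀ a' : Dual ℂ A, Tendsto (fun i => a' (N.e i)) atTop (𝓝 (e'' a'))) :
    (∀ b' : Dual ℂ B, ∃ (x' : Dual ℂ B) (a : A), b' = arensAdj πl x' a) ↔
      (∀ b'' : Dual ℂ (Dual ℂ B), arensExt πl e'' b'' = b'') := by
  obtain ⟨hbdd, -, he⟩ := hN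
  have hρ := arensAdj_arensAdj_of_map_mul hmod
  have hess (b' : Dual ℂ B) :=
    mem_essentialSubmodule_iff_exists_eq_apply (l := atTop) hρ hbdd he (x := b')
  have hlimit := tendsto_arensExt_apply_apply (l := atTop) πl hlim
  constructor
  · intro hfact b''
    ext b'
    exact tendsto_nhds_unique (hlimit b'' b')
      ((b''.continuous.tendsto b').comp ((hess b').mpr (hfact b')))
  · intro hunit b'
    refine (hess b').mp (Submodule.mem_of_forall_tendsto_dual (l := atTop)
      (isClosed_essentialSubmodule hbdd) (fun i => apply_mem_essentialSubmodule hρ he b' (N.e i))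
      fun b'' => ?_)
    simpa only [hunit] using hlimit b'' b'

/-- With `e''` a mixed unit of `A**` which is the weak* limit of a BAI,
`B*A = B*` iff `π_ℓ***(e'',b'') = b''` for all `b'' ∈ B**`. -/
theorem stmt_14 {A B : Type*} [NonUnitalNormedRing A] [NormedSpace ℂ A] [IsScalarTower ℂ A A] [SMulCommClass ℂ A A] [CompleteSpace A] [NormedAddCommGroup B] [NormedSpace ℂ B] [CompleteSpace B]
    (πl : A →L[ℂ] B →L[ℂ] B)
    (hmod : ∀ (a₁ a₂ : A) (b : B), πl (a₁ * a₂) b = πl a₁ (πl a₂ b))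
    (e'' : Dual ℂ (Dual ℂ A))
    (hmixr : ∀ a'' : Dual ℂ (Dual ℂ A), arensExt (ContinuousLinearMap.mul ℂ A) a'' e'' = a'')
    (hmixl : ∀ a'' : Dual ℂ (Dual ℂ A),
      arensExt (ContinuousLinearMap.mul ℂ A).flip a'' e'' = a'')
    (N : Net A) (hN : IsBAI N)
    (hlim : ∀ a' : Dual ℂ A, Tendsto (fun i => a' (N.e i)) atTop (𝓝 (e'' a'))) :
    (∀ b' : Dual ℂ B, ∃ (x' : Dual ℂ B) (a : A), b' = arensAdj πl x' a) ↔
      (∀ b'' : Dual ℂ (Dual ℂ B), arensExt πl e'' b'' = b'') :=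
  stmt_14_general πl hmod e'' N hN hlim
end

section
/- Let A be a Banach algebra whose bidual A** has a mixed unit e'' which is the weak* limit of a bounded approximate identity (e_α) of A, and let B be a right Banach A-module with action π_r : B × A → B such that Z_{e''}(π_r^t) = B**. Then B* factors on the right with respect to A, i.e. AB* = B*, if and only if e'' is a right unit A**-module for B**, i.e. π_r***(b'', e'') = b'' for every b'' ∈ B**. -/
open Filter Topology ContinuousLinearMap NormedSpace

/-
(⇒) For `b' = a · x'` one has
`⟨π_r**(e'', b'), b⟩ = lim_α x'(π_r(b, e_α a)) = x'(π_r(b, a)) = b'(b)`, so `π_r***(b'', e'')` and `b''` agree on `AB* = B*`.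

(⇐) For `b'' ∈ B**`, `⟨b'', e_α · b'⟩ → π_r^{t***}(e'', b'')(b') = π_r***(b'', e'')(b') = b''(b')`,
the middle equality being `Z_{e''}(π_r^t) = B**`. So `e_α · b' → b'` weakly; by Mazur `b'` lies in
the norm closure of `A · b'`, and as `(e_α)` is a bounded left approximate identity this gives
`e_α · b' → b'` in norm. Cohen's factorization theorem then writes `b' = a · y`.
-/

section CohenFactorization

variable {A M : Type*} [NonUnitalNormedRing A] [NormedSpace ℝ A]
  [NormedAddCommGroup M] [NormedSpace ℝ M]

theorem norm_units_inv_le_of_eq_one_sub {R : Type*} [NormedRing R] (u : Rˣ) {z : R}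
    (hu : (u : R) = 1 - z) (hz : ‖z‖ ≤ 1 / 2) : ‖(↑u⁻¹ : R)‖ ≤ 2 * ‖(1 : R)‖ := by
  have hw : (↑u⁻¹ : R) = 1 + z * ↑u⁻¹ := by
    have := u.mul_inv
    rwa [hu, sub_mul, one_mul, sub_eq_iff_eq_add] at this
  have : ‖(↑u⁻¹ : R)‖ ≤ ‖(1 : R)‖ + ‖z‖ * ‖(↑u⁻¹ : R)‖ := by
    conv_lhs => rw [hw]
    exact (norm_add_le _ _).trans (add_le_add_right (norm_mul_le _ _) _)
  nlinarith [norm_nonneg (↑u⁻¹ : R)]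

theorem exists_cauchySeq_forall_apply_eq [CompleteSpace M] {z : ℕ → M →L[ℝ] M}
    (hz : ∀ n, ‖z n‖ ≤ 1 / 2) {P : ℕ → M →L[ℝ] M} (hP0 : P 0 = 1)
    (hP : ∀ n, P (n + 1) = (1 - z n) * P n) {x : M} {δ : ℕ → ℝ} (hδ : ∀ n, ‖z n x‖ ≤ δ n)
    (hδs : Summable fun n => 2 ^ n * δ n) :
    ∃ y : ℕ → M, CauchySeq y ∧ ∀ n, P n (y n) = x := by
  have hone : ‖(1 : M →L[ℝ] M)‖ ≤ 1 := ContinuousLinearMap.norm_id_le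
  let G : ℕ → (M →L[ℝ] M)ˣ := fun n => Units.oneSub (z n) ((hz n).trans_lt (by norm_num))
  have hG : ∀ n, ‖(↑(G n)⁻¹ : M →L[ℝ] M)‖ ≤ 2 := fun n =>
    (norm_units_inv_le_of_eq_one_sub (G n) rfl (hz n)).trans (by linarith)
  obtain ⟨U, hU0, hUs⟩ : ∃ U : ℕ → (M →L[ℝ] M)ˣ, U 0 = 1 ∧ ∀ n, U (n + 1) = G n * U n :=
    ⟨fun n => Nat.rec 1 (fun k u => G k * u) n, rfl, fun n => rfl⟩
  have hU : ∀ n, (U n : M →L[ℝ] M) = P n := by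
    intro n
    induction n with
    | zero => rw [hP0, hU0, Units.val_one]
    | succ n ih => rw [hP, ← ih, hUs, Units.val_mul]; rfl
  have hUinv : ∀ n, ‖(↑(U n)⁻¹ : M →L[ℝ] M)‖ ≤ 2 ^ n := by
    intro n
    induction n with
    | zero => simpa [hU0] using hone
    | succ n ih =>
      calc ‖(↑(U (n + 1))⁻¹ : M →L[ℝ] M)‖ = ‖(↑(U n)⁻¹ : M →L[ℝ] M) * ↑(G n)⁻¹‖ := by
            rw [hUs, mul_inv_rev, Units.val_mul]
        _ ≤ 2 ^ n * 2 :=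
            (norm_mul_le _ _).trans (mul_le_mul ih (hG n) (norm_nonneg _) (by positivity))
        _ = 2 ^ (n + 1) := by ring
  have hstep : ∀ n, (↑(U (n + 1))⁻¹ : M →L[ℝ] M) - ↑(U n)⁻¹ = ↑(U (n + 1))⁻¹ * z n := by
    intro n
    have : (↑(U (n + 1))⁻¹ : M →L[ℝ] M) * (1 - z n) = ↑(U n)⁻¹ := by
      rw [hUs, mul_inv_rev, Units.val_mul, mul_assoc]
      have hG1 : (↑(G n)⁻¹ : M →L[ℝ] M) * (1 - z n) = 1 := (G n).inv_mul
      rw [hG1, mul_one]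
    rw [← this]; noncomm_ring
  refine ⟨fun n => (↑(U n)⁻¹ : M →L[ℝ] M) x, cauchySeq_of_summable_dist ?_, fun n => ?_⟩
  · refine Summable.of_nonneg_of_le (fun _ => dist_nonneg) (fun n => ?_) (hδs.mul_left 2)
    calc dist _ _ = ‖(↑(U (n + 1))⁻¹ : M →L[ℝ] M) (z n x)‖ := by
          rw [dist_comm, dist_eq_norm, ← sub_apply, hstep, mul_apply_eq_comp]
      _ ≤ 2 ^ (n + 1) * ‖z n x‖ :=
          (ContinuousLinearMap.le_opNorm _ _).trans (by gcongr; exact hUinv _)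
      _ ≤ 2 * (2 ^ n * δ n) := by rw [pow_succ]; nlinarith [hδ n, pow_pos (two_pos (α := ℝ)) n]
  · rw [← hU]
    exact congrArg (· x) (U n).mul_inv

theorem cauchySeq_of_cohen_recursion {t C : ℝ} (ht0 : 0 < t) (ht1 : t ≤ 1) {c g : ℕ → A}
    (hc : ∀ n, c (n + 1) = c n + t • ((1 - t) ^ n • g n + g n * c n - c n))
    (hg : ∀ n, ‖g n‖ ≤ C) {δ : ℕ → ℝ} (hδ : ∀ n, ‖g n * c n - c n‖ ≤ δ n) (hδs : Summable δ) :
    CauchySeq c := by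
  have hs : Summable fun n => (1 - t) ^ n * C + δ n :=
    ((summable_geometric_of_lt_one (by linarith) (by linarith)).mul_right C).add hδs
  refine cauchySeq_of_summable_dist (hs.of_nonneg_of_le (fun _ => dist_nonneg) fun n => ?_)
  have hpow : 0 ≤ (1 - t) ^ n := pow_nonneg (by linarith) n
  calc dist (c n) (c (n + 1)) = t * ‖(1 - t) ^ n • g n + (g n * c n - c n)‖ := by
        rw [dist_comm, dist_eq_norm, hc, add_sub_cancel_left, norm_smul, Real.norm_of_nonneg ht0.le,
          add_sub_assoc]
    _ ≤ 1 * ((1 - t) ^ n * C + δ n) := by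
        gcongr
        refine (norm_add_le _ _).trans (add_le_add ?_ (hδ n))
        rw [norm_smul, Real.norm_of_nonneg hpow]
        exact mul_le_mul_of_nonneg_left (hg n) hpow
    _ = _ := one_mul _

variable (ρ : A →L[ℝ] M →L[ℝ] M)

theorem one_sub_smul_mul_smul_add (hmul : ∀ a b, ρ (a * b) = ρ a * ρ b) (t s : ℝ) (g c : A) :
    (1 - t • (1 - ρ g)) * (s • 1 + ρ c) = ((1 - t) * s) • 1 + ρ (c + t • (s • g + g * c - c)) := by
  simp only [map_add, map_sub, map_smul, hmul, mul_add, sub_mul, one_mul, mul_one,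
    smul_mul_assoc, mul_smul_comm]
  module

theorem eq_apply_of_tendsto {x : M} {s : ℕ → ℝ} {c : ℕ → A} {y : ℕ → M} {a : A} {y₀ : M}
    (hs : Tendsto s atTop (𝓝 0)) (hc : Tendsto c atTop (𝓝 a)) (hy : Tendsto y atTop (𝓝 y₀))
    (hx : ∀ n, x = s n • y n + ρ (c n) (y n)) : x = ρ a y₀ := by
  have h := (hs.smul hy).add ((ρ.continuous₂.tendsto (a, y₀)).comp (hc.prodMk_nhds hy))
  simp only [zero_smul, zero_add, Function.comp_def, Function.uncurry_apply_pair, ← hx] at h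
  exact tendsto_nhds_unique tendsto_const_nhds h

theorem exists_cohen_recursion {ι : Type*} [Preorder ι] [IsDirected ι (· ≤ ·)] [Nonempty ι]
    {e : ι → A} (he : ∀ a, Tendsto (fun i => e i * a) atTop (𝓝 a)) {x : M}
    (hx : Tendsto (fun i => ρ (e i) x) atTop (𝓝 x)) (t : ℝ) {ε : ℕ → ℝ} (hε : ∀ n, 0 < ε n) :
    ∃ c g : ℕ → A, c 0 = 0 ∧ (∀ n, c (n + 1) = c n + t • ((1 - t) ^ n • g n + g n * c n - c n)) ∧
      ∀ n, g n ∈ Set.range e ∧ ‖g n * c n - c n‖ < ε n ∧ ‖ρ (g n) x - x‖ < ε n := by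
  have hsel : ∀ (c : A) (n : ℕ), ∃ i, ‖e i * c - c‖ < ε n ∧ ‖ρ (e i) x - x‖ < ε n := by
    intro c n
    simp only [← dist_eq_norm]
    exact ((Metric.tendsto_nhds.1 (he c) _ (hε n)).and (Metric.tendsto_nhds.1 hx _ (hε n))).exists
  choose i hi using hsel
  let c : ℕ → A := fun n =>
    Nat.rec 0 (fun k ck => ck + t • ((1 - t) ^ k • e (i ck k) + e (i ck k) * ck - ck)) n
  exact ⟨c, fun n => e (i (c n) n), rfl, fun n => rfl, fun n => ⟨⟨_, rfl⟩, hi (c n) n⟩⟩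

/-- **Cohen–Hewitt factorization.** With `g_k` taken from the approximate identity, the unitization
elements `∏_{k<n} ((1 - t) + t g_k) = (1 - t)^n + c_n` act invertibly on `M`; the `g_k` are chosen
so fast that `c_n → a` and `((1 - t)^n + ρ c_n)⁻¹ x → y`, whence `x = ρ a y`. -/
theorem exists_eq_apply_apply_of_tendsto [CompleteSpace A] [CompleteSpace M]
    (hmul : ∀ a b, ρ (a * b) = ρ a * ρ b) {ι : Type*} [Preorder ι] [IsDirected ι (· ≤ ·)]
    [Nonempty ι] {e : ι → A} {C : ℝ} (hC : ∀ i, ‖e i‖ ≤ C)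
    (he : ∀ a, Tendsto (fun i => e i * a) atTop (𝓝 a)) {x : M}
    (hx : Tendsto (fun i => ρ (e i) x) atTop (𝓝 x)) : ∃ a y, x = ρ a y := by
  have hC0 : 0 ≤ C := (norm_nonneg _).trans (hC (Classical.arbitrary ι))
  set t : ℝ := (2 * (1 + ‖ρ‖ * C))⁻¹ with ht
  have ht0 : 0 < t := by positivity
  have ht1 : t ≤ 1 / 2 := by
    rw [ht, inv_le_comm₀ (by positivity) (by norm_num)]
    nlinarith [mul_nonneg (norm_nonneg ρ) hC0]
  have hz : ∀ i, ‖t • (1 - ρ (e i))‖ ≤ 1 / 2 := by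
    intro i
    have : ‖1 - ρ (e i)‖ ≤ 1 + ‖ρ‖ * C :=
      (norm_sub_le _ _).trans (add_le_add ContinuousLinearMap.norm_id_le
        ((ρ.le_opNorm _).trans (mul_le_mul_of_nonneg_left (hC i) (norm_nonneg ρ))))
    rw [norm_smul, Real.norm_of_nonneg ht0.le]
    calc t * ‖1 - ρ (e i)‖ ≤ t * (1 + ‖ρ‖ * C) := by gcongr
      _ = 1 / 2 := by rw [ht]; field_simp
  obtain ⟨c, g, hc0, hc, hg⟩ :=
    exists_cohen_recursion ρ he hx t (ε := fun n => 4⁻¹ ^ n) fun n => by positivity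
  choose hge hgc hgx using hg
  have hzg : ∀ n, ‖t • (1 - ρ (g n))‖ ≤ 1 / 2 := fun n => by
    obtain ⟨i, hi⟩ := hge n
    exact hi ▸ hz i
  obtain ⟨y, hy, hPy⟩ := exists_cauchySeq_forall_apply_eq hzg
    (P := fun n => (1 - t) ^ n • 1 + ρ (c n)) (by simp [hc0])
    (fun n => by rw [one_sub_smul_mul_smul_add ρ hmul, ← hc, pow_succ', mul_comm])
    (x := x) (δ := fun n => 4⁻¹ ^ n) (fun n => by
      rw [smul_apply, norm_smul, Real.norm_of_nonneg ht0.le, sub_apply, one_apply_eq_self,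
        norm_sub_rev]
      nlinarith [hgx n, norm_nonneg (ρ (g n) x - x)])
    (by simp_rw [← mul_pow]; exact summable_geometric_of_lt_one (by norm_num) (by norm_num))
  obtain ⟨a, ha⟩ := cauchySeq_tendsto_of_complete
    (cauchySeq_of_cohen_recursion ht0 (by linarith) hc (fun n => (hge n).choose_spec ▸ hC _)
      (fun n => (hgc n).le) (summable_geometric_of_lt_one (by norm_num) (by norm_num)))
  obtain ⟨y₀, hy₀⟩ := cauchySeq_tendsto_of_complete hy
  exact ⟨a, y₀, eq_apply_of_tendsto ρ
    (tendsto_pow_atTop_nhds_zero_of_lt_one (r := 1 - t) (by linarith) (by linarith)) ha hy₀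
    fun n => (hPy n).symm⟩

end CohenFactorization

theorem mem_closure_of_forall_tendsto_dual {𝕜 E ι : Type*} [RCLike 𝕜] [NormedAddCommGroup E]
    [NormedSpace 𝕜 E] [NormedSpace ℝ E] [IsScalarTower ℝ 𝕜 E] {s : Set E} (hs : Convex ℝ s)
    {l : Filter ι} [l.NeBot] {u : ι → E} (hu : ∀ᶠ i in l, u i ∈ s) {x : E}
    (h : ∀ f : StrongDual 𝕜 E, Tendsto (fun i => f (u i)) l (𝓝 (f x))) : x ∈ closure s := by
  have hw : toWeakSpace 𝕜 E x ∈ closure (toWeakSpace 𝕜 E '' s) :=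
    mem_closure_of_tendsto ((WeakBilin.tendsto_iff_forall_eval_tendsto _
      (separatingDual_iff_injective.1 inferInstance)).2 h)
      (hu.mono fun _ hi => Set.mem_image_of_mem _ hi)
  rw [← hs.toWeakSpace_closure 𝕜] at hw
  exact (toWeakSpace 𝕜 E).injective.mem_set_image.1 hw

theorem tendsto_apply_of_mem_closure_range {𝕜 A M ι : Type*} [NontriviallyNormedField 𝕜]
    [NonUnitalNormedRing A] [NormedSpace 𝕜 A] [NormedAddCommGroup M] [NormedSpace 𝕜 M]
    (ρ : A →L[𝕜] M →L[𝕜] M) (hmul : ∀ a b, ρ (a * b) = ρ a * ρ b) [Preorder ι] {e : ι → A}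
    {C : ℝ} (hC : ∀ i, ‖e i‖ ≤ C) (he : ∀ a, Tendsto (fun i => e i * a) atTop (𝓝 a)) {w x : M}
    (hx : x ∈ closure (Set.range fun a => ρ a w)) : Tendsto (fun i => ρ (e i) x) atTop (𝓝 x) := by
  have hbdd : ∀ i, ‖ρ (e i)‖ ≤ ‖ρ‖ * C := fun i =>
    (ρ.le_opNorm _).trans (mul_le_mul_of_nonneg_left (hC i) (norm_nonneg ρ))
  have hequi : Equicontinuous fun i => ⇑(ρ (e i)) :=
    ((NormedSpace.equicontinuous_TFAE fun i => ρ (e i)).out 5 1).1 (Exists.intro _ hbdd)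
  have hclosed : IsClosed {v : M | Tendsto (fun i => ρ (e i) v) atTop (𝓝 v)} :=
    hequi.isClosed_setOfPred_tendsto continuous_id
  refine hclosed.closure_subset_iff.2 ?_ hx
  rintro _ ⟨a, rfl⟩
  simpa only [Set.mem_ofPred_eq, hmul, mul_apply_eq_comp, Function.comp_def, flip_apply] using
    ((ρ.flip w).continuous.tendsto a).comp (he a)

theorem tendsto_of_forall_tendsto_dual {𝕜 A M ι : Type*} [RCLike 𝕜] [NonUnitalNormedRing A]
    [NormedSpace 𝕜 A] [NormedAddCommGroup M] [NormedSpace 𝕜 M] [NormedSpace ℝ M]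
    [IsScalarTower ℝ 𝕜 M] (ρ : A →L[𝕜] M →L[𝕜] M) (hmul : ∀ a b, ρ (a * b) = ρ a * ρ b)
    [Preorder ι] [IsDirected ι (· ≤ ·)] [Nonempty ι] {e : ι → A} {C : ℝ} (hC : ∀ i, ‖e i‖ ≤ C)
    (he : ∀ a, Tendsto (fun i => e i * a) atTop (𝓝 a)) {x : M}
    (hx : ∀ f : StrongDual 𝕜 M, Tendsto (fun i => f (ρ (e i) x)) atTop (𝓝 (f x))) :
    Tendsto (fun i => ρ (e i) x) atTop (𝓝 x) := by
  have hconv : Convex ℝ (Set.range fun a => ρ a x) := by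
    convert ((LinearMap.range (ρ.flip x : A →ₗ[𝕜] M)).restrictScalars ℝ).convex
    ext; simp
  exact tendsto_apply_of_mem_closure_range ρ hmul hC he
    (mem_closure_of_forall_tendsto_dual hconv (Eventually.of_forall fun i => ⟨e i, rfl⟩) hx)

section RightModule

variable {A B : Type*} [NonUnitalNormedRing A] [NormedSpace ℂ A] [NormedAddCommGroup B]
  [NormedSpace ℂ B] (πr : B →L[ℂ] A →L[ℂ] B)

noncomputable def dualAction : A →L[ℂ] Dual ℂ B →L[ℂ] Dual ℂ B := (arensAdj πr.flip).flip

@[simp]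
theorem dualAction_apply_apply (a : A) (b' : Dual ℂ B) (b : B) :
    dualAction πr a b' b = b' (πr b a) := rfl

variable {πr}

theorem dualAction_mul (hmod : ∀ (b : B) (a₁ a₂ : A), πr (πr b a₁) a₂ = πr b (a₁ * a₂))
    (a₁ a₂ : A) : dualAction πr (a₁ * a₂) = dualAction πr a₁ * dualAction πr a₂ := by
  ext b' b
  simp [hmod]

theorem arensAdj_arensAdj_dualAction {ι : Type*} [Preorder ι] [IsDirected ι (· ≤ ·)] [Nonempty ι]
    {e : ι → A} (hmod : ∀ (b : B) (a₁ a₂ : A), πr (πr b a₁) a₂ = πr b (a₁ * a₂))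
    (he : ∀ a, Tendsto (fun i => e i * a) atTop (𝓝 a)) {e'' : Dual ℂ (Dual ℂ A)}
    (hlim : ∀ a' : Dual ℂ A, Tendsto (fun i => a' (e i)) atTop (𝓝 (e'' a'))) (a : A)
    (x' : Dual ℂ B) : arensAdj (arensAdj πr) e'' (dualAction πr a x') = dualAction πr a x' := by
  ext b
  refine tendsto_nhds_unique (hlim _) ?_
  simpa [arensAdj, hmod, Function.comp_def] using
    ((x'.comp (πr b)).continuous.tendsto a).comp (he a)

theorem tendsto_apply_dualAction {ι : Type*} [Preorder ι] {e : ι → A} {e'' : Dual ℂ (Dual ℂ A)}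
    (hlim : ∀ a' : Dual ℂ A, Tendsto (fun i => a' (e i)) atTop (𝓝 (e'' a')))
    (b'' : Dual ℂ (Dual ℂ B)) (b' : Dual ℂ B) :
    Tendsto (fun i => b'' (dualAction πr (e i) b')) atTop (𝓝 (arensExt πr.flip e'' b'' b')) :=
  hlim (arensAdj (arensAdj πr.flip) b'' b')

theorem exists_eq_dualAction_apply [CompleteSpace A]
    (hmod : ∀ (b : B) (a₁ a₂ : A), πr (πr b a₁) a₂ = πr b (a₁ * a₂)) {ι : Type*} [Preorder ι]
    [IsDirected ι (· ≤ ·)] [Nonempty ι] {e : ι → A} {C : ℝ} (hC : ∀ i, ‖e i‖ ≤ C)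
    (he : ∀ a, Tendsto (fun i => e i * a) atTop (𝓝 a)) {b' : Dual ℂ B}
    (hb' : Tendsto (fun i => dualAction πr (e i) b') atTop (𝓝 b')) :
    ∃ a y, b' = dualAction πr a y := by
  let ρ : A →L[ℝ] Dual ℂ B →L[ℝ] Dual ℂ B :=
    (ContinuousLinearMap.restrictScalarsL ℂ (Dual ℂ B) (Dual ℂ B) ℝ ℝ).comp
      ((dualAction πr).restrictScalars ℝ)
  have hρ : ∀ a w, ρ a w = dualAction πr a w := fun _ _ => rfl
  have hmul : ∀ a₁ a₂, ρ (a₁ * a₂) = ρ a₁ * ρ a₂ := fun a₁ a₂ => by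
    ext w : 1
    simp only [hρ, mul_apply_eq_comp, dualAction_mul hmod]
  exact exists_eq_apply_apply_of_tendsto ρ hmul hC he (by simpa only [hρ] using hb')

end RightModule

theorem stmt_15_general {A B : Type*} [NonUnitalNormedRing A] [NormedSpace ℂ A] [CompleteSpace A] [NormedAddCommGroup B] [NormedSpace ℂ B]
    (πr : B →L[ℂ] A →L[ℂ] B)
    (hmod : ∀ (b : B) (a₁ a₂ : A), πr (πr b a₁) a₂ = πr b (a₁ * a₂))
    (e'' : Dual ℂ (Dual ℂ A))
    (N : Net A) (hN : IsBAI N)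
    (hlim : ∀ a' : Dual ℂ A, Tendsto (fun i => a' (N.e i)) atTop (𝓝 (e'' a')))
    (hZ : ∀ b'' : Dual ℂ (Dual ℂ B), arensExt πr.flip e'' b'' = arensExt πr b'' e'') :
    (∀ b' : Dual ℂ B, ∃ (a : A) (x' : Dual ℂ B), b' = arensAdj πr.flip x' a) ↔
      (∀ b'' : Dual ℂ (Dual ℂ B), arensExt πr b'' e'' = b'') := by
  obtain ⟨⟨C, hC⟩, hleft, -⟩ := hN
  constructor
  · intro hfac b''
    ext b'
    obtain ⟨a, x', rfl⟩ := hfac b'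
    exact congrArg b'' (arensAdj_arensAdj_dualAction hmod hleft hlim a x')
  · intro hunit b'
    have hweak : ∀ f : Dual ℂ (Dual ℂ B),
        Tendsto (fun i => f (dualAction πr (N.e i) b')) atTop (𝓝 (f b')) := fun f => by
      simpa only [hZ, hunit] using tendsto_apply_dualAction (πr := πr) hlim f b'
    exact exists_eq_dualAction_apply hmod hC hleft
      (tendsto_of_forall_tendsto_dual _ (dualAction_mul hmod) hC hleft hweak)

/-- With `e''` a mixed unit of `A**` which is the weak* limit of a BAI,
and `Z_{e''}(π_r^t) = B**`, `AB* = B*` iff `π_r***(b'',e'') = b''` for all `b'' ∈ B**`. -/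
theorem stmt_15 {A B : Type*} [NonUnitalNormedRing A] [NormedSpace ℂ A] [IsScalarTower ℂ A A] [SMulCommClass ℂ A A] [CompleteSpace A] [NormedAddCommGroup B] [NormedSpace ℂ B] [CompleteSpace B]
    (πr : B →L[ℂ] A →L[ℂ] B)
    (hmod : ∀ (b : B) (a₁ a₂ : A), πr (πr b a₁) a₂ = πr b (a₁ * a₂))
    (e'' : Dual ℂ (Dual ℂ A))
    (hmixr : ∀ a'' : Dual ℂ (Dual ℂ A), arensExt (ContinuousLinearMap.mul ℂ A) a'' e'' = a'')
    (hmixl : ∀ a'' : Dual ℂ (Dual ℂ A),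
      arensExt (ContinuousLinearMap.mul ℂ A).flip a'' e'' = a'')
    (N : Net A) (hN : IsBAI N)
    (hlim : ∀ a' : Dual ℂ A, Tendsto (fun i => a' (N.e i)) atTop (𝓝 (e'' a')))
    (hZ : ∀ b'' : Dual ℂ (Dual ℂ B), arensExt πr.flip e'' b'' = arensExt πr b'' e'') :
    (∀ b' : Dual ℂ B, ∃ (a : A) (x' : Dual ℂ B), b' = arensAdj πr.flip x' a) ↔
      (∀ b'' : Dual ℂ (Dual ℂ B), arensExt πr b'' e'' = b'') :=
  stmt_15_general πr hmod e'' N hN hlim hZ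
end
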